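/- Let S be a finite semigroup of order s, and suppose there exist elements z_0, z_1 ∈ S that both occur as products (i.e., are values of the multiplication), with N_S(z_0) − N_S(z_1) > 4(s − 1). Then the function Q(v) = N_S(s_k) − 2N_R(v) − 2N_C(v) is not constant on the vertices of Γ(S), and hence Γ(S) is not regular. -/

import Mathlib

/-!
Write `Q(v) = N_S(k) - 2 N_R(v) - 2 N_C(v)` for a vertex `v = (i, j, k)`. The neighbours of `v` in
`Γ(S)` are the `(i, t, it)` with `t ≠ j`, `it ≠ k`, the `(t, j, tj)` with `t ≠ i`, `tj ≠ k`, and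
the `(a, b, k)` with `a ≠ i`, `b ≠ j`; these three families have `s - 1 - N_R(v)`,
`s - 1 - N_C(v)` and `N_S(k) - 1 - N_R(v) - N_C(v)` members, so `deg v = Q(v) + 2s - 3` and
`Γ(S)` is regular exactly when `Q` is constant. But `0 ≤ N_R, N_C ≤ s - 1` gives
`Q(v₀) ≥ N_S(z₀) - 4(s - 1) > N_S(z₁) ≥ Q(v₁)` for vertices `v₀, v₁` with last coordinates
`z₀, z₁`.
-/

open Finset

variable {S : Type*} [Fintype S] [DecidableEq S]

/-- Two triples agree in exactly one coordinate. -/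
def agreeOne (v w : S × S × S) : Prop :=
  (v.1 = w.1 ∧ v.2.1 ≠ w.2.1 ∧ v.2.2 ≠ w.2.2) ∨
  (v.1 ≠ w.1 ∧ v.2.1 = w.2.1 ∧ v.2.2 ≠ w.2.2) ∨
  (v.1 ≠ w.1 ∧ v.2.1 ≠ w.2.1 ∧ v.2.2 = w.2.2)

/-- The generalized Latin square graph of a multiplication `mul` on `S`:
vertices are triples `(a,b,c)` with `mul a b = c`, two distinct vertices being
adjacent iff they agree in exactly one coordinate. -/
def GLSG (mul : S → S → S) :
    SimpleGraph {v : S × S × S // mul v.1 v.2.1 = v.2.2} where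
  Adj v w := v ≠ w ∧ agreeOne v.1 w.1
  symm := by
    constructor
    rintro v w ⟨h1, h2⟩
    refine ⟨h1.symm, ?_⟩
    rcases h2 with ⟨a, b, c⟩ | ⟨a, b, c⟩ | ⟨a, b, c⟩
    · exact Or.inl ⟨a.symm, b.symm, c.symm⟩
    · exact Or.inr (Or.inl ⟨a.symm, b.symm, c.symm⟩)
    · exact Or.inr (Or.inr ⟨a.symm, b.symm, c.symm⟩)
  loopless := by constructor; rintro v ⟨h1, _⟩; exact h1 rfl

instance (v w : S × S × S) : Decidable (agreeOne v w) := by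
  unfold agreeOne; infer_instance

instance (mul : S → S → S) : DecidableRel (GLSG mul).Adj := fun v w =>
  inferInstanceAs (Decidable (v ≠ w ∧ agreeOne v.1 w.1))

/-- `N_S(k)`: the number of ordered pairs `(x,y)` with `x*y = k`. -/
def NScount (mul : S → S → S) (k : S) : ℕ :=
  (univ.filter fun p : S × S => mul p.1 p.2 = k).card

/-- `N_R(v)` for `v = (i,j,k)`: the number of `t ≠ j` with `i*t = k`. -/
def NRcount (mul : S → S → S) (i j k : S) : ℕ :=
  (univ.filter fun t : S => t ≠ j ∧ mul i t = k).card

/-- `N_C(v)` for `v = (i,j,k)`: the number of `t ≠ i` with `t*j = k`. -/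
def NCcount (mul : S → S → S) (i j k : S) : ℕ :=
  (univ.filter fun t : S => t ≠ i ∧ mul t j = k).card
lemma GLSG_adj_iff {α : Type*} {mul : α → α → α}
    {v w : {v : α × α × α // mul v.1 v.2.1 = v.2.2}} :
    (GLSG mul).Adj v w ↔ agreeOne v.1 w.1 :=
  ⟨And.right, fun h => ⟨by rintro rfl; unfold agreeOne at h; tauto, h⟩⟩

def vertexEquiv {α : Type*} (mul : α → α → α) :
    α × α ≃ {v : α × α × α // mul v.1 v.2.1 = v.2.2} where
  toFun p := ⟨(p.1, p.2, mul p.1 p.2), rfl⟩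
  invFun v := (v.1.1, v.1.2.1)
  left_inv _ := rfl
  right_inv := fun ⟨_, h⟩ => Subtype.ext <| Prod.ext rfl <| Prod.ext rfl h

/-- Inclusion–exclusion over which coordinates of `(a, b, ab)` agree with those of `(i, j, k)`. -/
lemma ite_agreeOne_eq {α : Type*} [DecidableEq α] {mul : α → α → α} {i j k a b : α}
    (h : mul i j = k) :
    (if agreeOne (i, j, k) (a, b, mul a b) then 1 else 0 : ℤ) =
      (if a = i ∧ b ≠ j then 1 else 0) + (if b = j ∧ a ≠ i then 1 else 0)
        + (if mul a b = k then 1 else 0) - (if a = i ∧ b = j then 1 else 0)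
        - 2 * (if a = i ∧ (b ≠ j ∧ mul i b = k) then 1 else 0)
        - 2 * (if b = j ∧ (a ≠ i ∧ mul a j = k) then 1 else 0) := by
  subst h
  unfold agreeOne
  by_cases ha : a = i <;> by_cases hb : b = j <;> simp_all [eq_comm] <;> split_ifs <;> norm_num

lemma card_filter_fst_eq_and {α β : Type*} [Fintype α] [Fintype β] [DecidableEq α]
    (i : α) (P : β → Prop) [DecidablePred P] :
    #{p : α × β | p.1 = i ∧ P p.2} = #{b | P b} := by
  have : filter (fun p : α × β => p.1 = i ∧ P p.2) univ = {i} ×ˢ filter P univ := by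
    ext ⟨a, b⟩; simp [and_comm, eq_comm]
  rw [this, card_product, card_singleton, one_mul]

lemma card_filter_snd_eq_and {α β : Type*} [Fintype α] [Fintype β] [DecidableEq β]
    (j : β) (P : α → Prop) [DecidablePred P] :
    #{p : α × β | p.2 = j ∧ P p.1} = #{a | P a} := by
  have : filter (fun p : α × β => p.2 = j ∧ P p.1) univ = filter P univ ×ˢ {j} := by
    ext ⟨a, b⟩; simp [and_comm, eq_comm]
  rw [this, card_product, card_singleton, mul_one]

section

variable (mul : S → S → S)

lemma NRcount_lt_card (i j k : S) : NRcount mul i j k < Fintype.card S :=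
  card_lt_card (filter_ssubset.2 ⟨j, mem_univ j, fun h => h.1 rfl⟩)

lemma NCcount_lt_card (i j k : S) : NCcount mul i j k < Fintype.card S :=
  card_lt_card (filter_ssubset.2 ⟨i, mem_univ i, fun h => h.1 rfl⟩)

def qValue (v : S × S × S) : ℤ :=
  NScount mul v.2.2 - 2 * NRcount mul v.1 v.2.1 v.2.2 - 2 * NCcount mul v.1 v.2.1 v.2.2

lemma qValue_le (v : S × S × S) : qValue mul v ≤ NScount mul v.2.2 := by
  unfold qValue
  omega

lemma qValue_ge (v : S × S × S) :
    (NScount mul v.2.2 : ℤ) - 4 * (Fintype.card S - 1) ≤ qValue mul v := by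
  have := NRcount_lt_card mul v.1 v.2.1 v.2.2
  have := NCcount_lt_card mul v.1 v.2.1 v.2.2
  unfold qValue
  omega

lemma GLSG_degree_eq_card_agreeOne (v : {v : S × S × S // mul v.1 v.2.1 = v.2.2}) :
    (GLSG mul).degree v = #{p : S × S | agreeOne v.1 (p.1, p.2, mul p.1 p.2)} := by
  rw [← SimpleGraph.card_neighborFinset_eq_degree, SimpleGraph.neighborFinset_eq_filter]
  refine (card_equiv (vertexEquiv mul) fun p => ?_).symm
  simp only [mem_filter, mem_univ, true_and, GLSG_adj_iff]
  rfl

theorem GLSG_degree (v : {v : S × S × S // mul v.1 v.2.1 = v.2.2}) :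
    ((GLSG mul).degree v : ℤ) = qValue mul v.1 + 2 * Fintype.card S - 3 := by
  obtain ⟨⟨i, j, k⟩, h⟩ := v
  rw [GLSG_degree_eq_card_agreeOne, natCast_card_filter]
  simp only [ite_agreeOne_eq h, sum_add_distrib, sum_sub_distrib, ← mul_sum, sum_boole]
  rw [card_filter_fst_eq_and i (· ≠ j), card_filter_snd_eq_and j (· ≠ i),
    card_filter_fst_eq_and i (· = j), card_filter_fst_eq_and i (fun b => b ≠ j ∧ mul i b = k),
    card_filter_snd_eq_and j (fun a => a ≠ i ∧ mul a j = k)]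
  have card_ne (x : S) : #{y | y ≠ x} + 1 = Fintype.card S := by
    rw [filter_ne', card_erase_add_one (mem_univ x), card_univ]
  have card_eq : #{y | y = j} = 1 := by
    rw [filter_eq', if_pos (mem_univ j), card_singleton]
  have := card_ne i
  have := card_ne j
  simp only [qValue, NScount, NRcount, NCcount]
  omega

end

theorem stmt11_general (mul : S → S → S)
    (z₀ z₁ : S) (h₀ : ∃ x y : S, mul x y = z₀) (h₁ : ∃ x y : S, mul x y = z₁)
    (hΔ : (NScount mul z₀ : ℤ) - NScount mul z₁ > 4 * (Fintype.card S - 1)) :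
    (¬ ∃ q : ℤ, ∀ v : {v : S × S × S // mul v.1 v.2.1 = v.2.2},
        (NScount mul v.1.2.2 : ℤ)
          - 2 * NRcount mul v.1.1 v.1.2.1 v.1.2.2
          - 2 * NCcount mul v.1.1 v.1.2.1 v.1.2.2 = q) ∧
    ¬ ∃ d, (GLSG mul).IsRegularOfDegree d := by
  obtain ⟨x₀, y₀, rfl⟩ := h₀
  obtain ⟨x₁, y₁, rfl⟩ := h₁
  have hQ : ¬ ∃ q : ℤ, ∀ v : {v : S × S × S // mul v.1 v.2.1 = v.2.2}, qValue mul v.1 = q := by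
    rintro ⟨q, hq⟩
    have hq₀ := qValue_ge mul (x₀, y₀, mul x₀ y₀)
    have hq₁ := qValue_le mul (x₁, y₁, mul x₁ y₁)
    rw [hq ⟨_, rfl⟩] at hq₀ hq₁
    linarith
  refine ⟨hQ, ?_⟩
  rintro ⟨d, hd⟩
  refine hQ ⟨d - 2 * Fintype.card S + 3, fun v => ?_⟩
  have hv := GLSG_degree mul v
  rw [hd v] at hv
  linarith

/-- If `z₀, z₁` both occur as products and `N_S(z₀) - N_S(z₁) > 4(s-1)`, then
`Q` is not constant on the vertices of `Γ(S)`, and `Γ(S)` is not regular. -/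
theorem stmt11 (mul : S → S → S)
    (hassoc : ∀ a b c : S, mul (mul a b) c = mul a (mul b c))
    (z₀ z₁ : S) (h₀ : ∃ x y : S, mul x y = z₀) (h₁ : ∃ x y : S, mul x y = z₁)
    (hΔ : (NScount mul z₀ : ℤ) - NScount mul z₁ > 4 * (Fintype.card S - 1)) :
    (¬ ∃ q : ℤ, ∀ v : {v : S × S × S // mul v.1 v.2.1 = v.2.2},
        (NScount mul v.1.2.2 : ℤ)
          - 2 * NRcount mul v.1.1 v.1.2.1 v.1.2.2
          - 2 * NCcount mul v.1.1 v.1.2.1 v.1.2.2 = q) ∧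
    ¬ ∃ d, (GLSG mul).IsRegularOfDegree d :=
  stmt11_general mul z₀ z₁ h₀ h₁ hΔ
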